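/- arXiv:2003.12899 — 2 statements merged into one kernel-verified Lean document; each statement's English description precedes it below -/
import Mathlib

section
/- Let Ω be a nonempty convex subset of a real vector space X with core(Ω) ≠ ∅, and let x₀ ∈ X with x₀ ∉ core(Ω). Then x₀ is properly separated from Ω by a hyperplane: there exist a nonzero linear function f : X → ℝ and a point w ∈ Ω such that f(x) ≤ f(x₀) for all x ∈ Ω and f(w) < f(x₀). -/
open Pointwise Set

/-- Algebraic core (algebraic interior) of a set in a real vector space. -/
def algCore {X : Type*} [AddCommGroup X] [Module ℝ X] (Ω : Set X) : Set X :=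
  {x | x ∈ Ω ∧ ∀ v : X, ∃ δ : ℝ, 0 < δ ∧ ∀ t : ℝ, |t| < δ → x + t • v ∈ Ω}

/-- Normal cone to a convex set `Ω` at `xbar`, consisting of linear functionals. -/
def normalCone {X : Type*} [AddCommGroup X] [Module ℝ X] (xbar : X) (Ω : Set X) :
    Set (X →ₗ[ℝ] ℝ) :=
  {f | ∀ x ∈ Ω, f (x - xbar) ≤ 0}

/-- Extremal system of two sets in a vector space. -/
def IsExtremal {X : Type*} [AddCommGroup X] [Module ℝ X] (Ω₁ Ω₂ : Set X) : Prop :=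
  ∃ x₀ : X, ∀ δ : ℝ, 0 < δ → ∃ t₀ : ℝ, |t₀| < δ ∧
    ((fun w => w + t₀ • x₀) '' Ω₁) ∩ Ω₂ = ∅

/-- Domain of a set-valued mapping. -/
def svDom {X Y : Type*} (F : X → Set Y) : Set X := {x | (F x).Nonempty}

/-- Graph of a set-valued mapping. -/
def svGraph {X Y : Type*} (F : X → Set Y) : Set (X × Y) := {p | p.2 ∈ F p.1}

/-- Coderivative of a set-valued mapping `F` at `(xbar, ybar) ∈ gph F` applied to a linear
functional `g`: the set of linear `f` with `(f, -g)` in the normal cone to the graph. -/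
def coderiv {X Y : Type*} [AddCommGroup X] [Module ℝ X] [AddCommGroup Y] [Module ℝ Y]
    (F : X → Set Y) (xbar : X) (ybar : Y) (g : Y →ₗ[ℝ] ℝ) : Set (X →ₗ[ℝ] ℝ) :=
  {f | ∀ x : X, ∀ y ∈ F x, f (x - xbar) - g (y - ybar) ≤ 0}

/-- Subdifferential (of linear functionals) of an extended-real-valued function. -/
def subdiff {X : Type*} [AddCommGroup X] [Module ℝ X] (φ : X → EReal) (xbar : X) :
    Set (X →ₗ[ℝ] ℝ) :=
  {f | ∀ x : X, φ xbar + (f (x - xbar) : EReal) ≤ φ x}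

/-- Effective domain of an extended-real-valued function with values in `ℝ ∪ {+∞}`. -/
def fDom {X : Type*} (φ : X → EReal) : Set X := {x | φ x < ⊤}

/-- Epigraph of an extended-real-valued function. -/
def epi {X : Type*} (φ : X → EReal) : Set (X × ℝ) := {p | φ p.1 ≤ (p.2 : EReal)}

/-- Convexity of an extended-real-valued function (with values in `ℝ ∪ {+∞}`). -/
def ConvexFun {X : Type*} [AddCommGroup X] [Module ℝ X] (φ : X → EReal) : Prop :=
  ∀ x y : X, ∀ t : ℝ, 0 ≤ t → t ≤ 1 →
    φ (t • x + (1 - t) • y) ≤ (t : EReal) * φ x + ((1 - t : ℝ) : EReal) * φ y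

/-- Composition of set-valued mappings. -/
def svComp {X Y Z : Type*} (G : Y → Set Z) (F : X → Set Y) : X → Set Z :=
  fun x => ⋃ y ∈ F x, G y

/-- The linear functional on `X × Y` identified with a pair `(f, g)` of linear
functionals on `X` and `Y`. -/
def pairFun {X Y : Type*} [AddCommGroup X] [Module ℝ X] [AddCommGroup Y] [Module ℝ Y]
    (f : X →ₗ[ℝ] ℝ) (g : Y →ₗ[ℝ] ℝ) : X × Y →ₗ[ℝ] ℝ :=
  f ∘ₗ LinearMap.fst ℝ X Y + g ∘ₗ LinearMap.snd ℝ X Y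
/-!
Translate a core point `a` of `Ω` to the origin. The gauge of the translated set `S` is then a
finite sublinear functional, and every `z` with `gauge S z < 1` lies in `core S`, because
`z = r • y` with `y ∈ S`, `r < 1`, leaves room `(1 - r) • core S` around `z`. Hence
`z = x₀ - a` has gauge at least one, and Hahn–Banach extends `c • z ↦ c` to a linear `f`
dominated by the gauge: `f ≤ 1 = f z` on `S`, while `f 0 = 0 < 1` gives properness.
-/

open Filter Topology

section

variable {X : Type*} [AddCommGroup X] [Module ℝ X] {S : Set X}

theorem mem_algCore_iff {x : X} : x ∈ algCore S ↔ ∀ v : X, ∀ᶠ t in 𝓝 (0 : ℝ), x + t • v ∈ S := by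
  simp only [algCore, Set.mem_ofPred_eq, Metric.eventually_nhds_iff, Real.dist_eq, sub_zero]
  refine ⟨fun h => h.2, fun h => ⟨?_, h⟩⟩
  obtain ⟨δ, hδ, hδS⟩ := h 0
  simpa using hδS (y := 0) (by simpa using hδ)

theorem mem_algCore_preimage_add {a x : X} :
    x ∈ algCore ((a + ·) ⁻¹' S) ↔ a + x ∈ algCore S := by
  simp only [mem_algCore_iff, Set.mem_preimage, add_assoc]

theorem absorbent_of_zero_mem_algCore (h0 : (0 : X) ∈ algCore S) : Absorbent ℝ S :=
  absorbent_iff_eventually_nhdsNE_zero.2 fun v =>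
    ((mem_algCore_iff.1 h0 v).filter_mono nhdsWithin_le_nhds).mono fun _ ht => by
      simpa using ht

theorem mem_algCore_of_gauge_lt_one (hS : Convex ℝ S) (h0 : (0 : X) ∈ algCore S) {z : X}
    (hz : gauge S z < 1) : z ∈ algCore S := by
  obtain ⟨r, hr0, hr1, y, hy, rfl⟩ := exists_lt_of_gauge_lt (absorbent_of_zero_mem_algCore h0) hz
  refine mem_algCore_iff.2 fun v => ?_
  filter_upwards [mem_algCore_iff.1 h0 ((1 - r)⁻¹ • v)] with t ht
  rw [zero_add] at ht
  convert hS hy ht hr0.le (sub_nonneg.2 hr1.le) (add_sub_cancel r 1) using 1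
  rw [smul_smul, smul_smul, mul_comm (1 - r) t, mul_assoc, mul_inv_cancel₀ (sub_ne_zero.2 hr1.ne'),
    mul_one]

theorem one_le_gauge_of_notMem_algCore (hS : Convex ℝ S) (h0 : (0 : X) ∈ algCore S) {z : X}
    (hz : z ∉ algCore S) : 1 ≤ gauge S z :=
  not_lt.1 (mt (mem_algCore_of_gauge_lt_one hS h0) hz)

theorem exists_linearMap_eq_one_le_gauge (hS : Convex ℝ S) (habs : Absorbent ℝ S) {z : X}
    (hz : 1 ≤ gauge S z) :
    ∃ f : X →ₗ[ℝ] ℝ, f z = 1 ∧ ∀ x, f x ≤ gauge S x := by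
  have hz0 : z ≠ 0 := by
    rintro rfl
    rw [gauge_zero] at hz
    linarith
  let g : X →ₗ.[ℝ] ℝ := LinearPMap.mkSpanSingleton z 1 hz0
  have hg : ∀ x : g.domain, g x ≤ gauge S x := by
    rintro ⟨_, hx⟩
    obtain ⟨c, rfl⟩ := Submodule.mem_span_singleton.1 hx
    rw [LinearPMap.mkSpanSingleton'_apply, smul_eq_mul, mul_one]
    rcases le_or_gt 0 c with hc | hc
    · rw [gauge_smul_of_nonneg hc, smul_eq_mul]
      exact le_mul_of_one_le_right hc hz
    · exact hc.le.trans (gauge_nonneg _)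
  obtain ⟨f, hfg, hf⟩ := exists_extension_of_le_sublinear g (gauge S)
    (fun c hc x => by rw [gauge_smul_of_nonneg hc.le, smul_eq_mul]) (gauge_add_le hS habs) hg
  exact ⟨f, (hfg ⟨z, Submodule.mem_span_singleton_self z⟩).trans
    (LinearPMap.mkSpanSingleton_apply ℝ ℝ hz0 1), hf⟩

end

theorem proper_separation_of_notMem_core_general {X : Type*} [AddCommGroup X] [Module ℝ X]
    {Ω : Set X} (hconv : Convex ℝ Ω)
    (hsolid : (algCore Ω).Nonempty) (x₀ : X) (hx₀ : x₀ ∉ algCore Ω) :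
    ∃ f : X →ₗ[ℝ] ℝ, f ≠ 0 ∧ (∀ x ∈ Ω, f x ≤ f x₀) ∧ ∃ w ∈ Ω, f w < f x₀ := by
  obtain ⟨a, ha⟩ := hsolid
  set S := (a + ·) ⁻¹' Ω
  have hS : Convex ℝ S := hconv.translate_preimage_right a
  have h0 : (0 : X) ∈ algCore S := mem_algCore_preimage_add.2 (by rwa [add_zero])
  have hz : x₀ - a ∉ algCore S := by rwa [mem_algCore_preimage_add, add_sub_cancel]
  obtain ⟨f, hfz, hf⟩ := exists_linearMap_eq_one_le_gauge hS (absorbent_of_zero_mem_algCore h0)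
    (one_le_gauge_of_notMem_algCore hS h0 hz)
  rw [map_sub] at hfz
  have hfS : ∀ x ∈ Ω, f x - f a ≤ 1 := fun x hx => by
    rw [← map_sub]
    exact (hf _).trans (gauge_le_one_of_mem (by simpa [S] using hx))
  refine ⟨f, ?_, fun x hx => by linarith [hfS x hx], a, ha.1, by linarith⟩
  rintro rfl
  simp at hfz

/-- a point outside the core of a nonempty core-solid convex set is
properly separated from the set by a hyperplane. -/
theorem proper_separation_of_notMem_core {X : Type*} [AddCommGroup X] [Module ℝ X]
    {Ω : Set X} (hne : Ω.Nonempty) (hconv : Convex ℝ Ω)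
    (hsolid : (algCore Ω).Nonempty) (x₀ : X) (hx₀ : x₀ ∉ algCore Ω) :
    ∃ f : X →ₗ[ℝ] ℝ, f ≠ 0 ∧ (∀ x ∈ Ω, f x ≤ f x₀) ∧ ∃ w ∈ Ω, f w < f x₀ :=
  proper_separation_of_notMem_core_general hconv hsolid x₀ hx₀
end

section
/- Let φ : X × Y → ℝ ∪ {+∞} be a convex function and F : X ⇒ Y a set-valued mapping with convex graph between real vector spaces, and let μ(x) := inf{φ(x, y) : y ∈ F(x)} be the associated marginal (optimal value) function. Assume μ(x) > −∞ for all x ∈ X, fix x̄ ∈ dom(μ), assume S(x̄) := {ȳ ∈ F(x̄) : μ(x̄) = φ(x̄, ȳ)} ≠ ∅, and assume the qualification condition: core(epi(φ)) ≠ ∅ and core(dom(φ)) ∩ gph(F) ≠ ∅. Then for any ȳ ∈ S(x̄) one has ∂μ(x̄) = ∪{f + D*F(x̄, ȳ)(g) : (f, g) ∈ ∂φ(x̄, ȳ)}, where a pair (f, g) of linear functions on X and Y is identified with the linear function (x, y) ↦ f(x) + g(y) on X × Y. -/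
/-! If `h ∈ ∂μ(x̄)`, then `(x̄, ȳ)` minimizes `φ(z) - h(z.1 - x̄)` over `gph F`, so the hard
inclusion is the sum rule `∂(φ + δ_Ω)(z̄) ⊆ ∂φ(z̄) + N(z̄; Ω)` for `Ω = gph F`. That rule comes
from separating `epi φ` from the hypograph over `Ω` of the affine minorant. Without a topology,
the separation is Hahn–Banach extension under the gauge of a convex set with nonempty algebraic
core, which `core(epi φ) ≠ ∅` provides; `core(dom φ) ∩ Ω ≠ ∅` rules out a vertical separating
hyperplane. The reverse inclusion is a direct estimate of the infimum defining `μ`. -/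

open Pointwise Set

section AlgebraicSeparation

variable {V : Type*} [AddCommGroup V] [Module ℝ V]

theorem algCore_smul_add_smul_mem {K : Set V} (hK : Convex ℝ K) {a b : V} (ha : a ∈ algCore K)
    (hb : b ∈ K) {s : ℝ} (hs₀ : 0 < s) (hs₁ : s ≤ 1) : s • a + (1 - s) • b ∈ algCore K := by
  refine ⟨hK ha.1 hb hs₀.le (by linarith) (by ring), fun v => ?_⟩
  obtain ⟨δ, hδ, hδK⟩ := ha.2 v
  refine ⟨s * δ, by positivity, fun t ht => ?_⟩
  have hmem : a + (t / s) • v ∈ K := hδK _ <| by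
    rwa [abs_div, abs_of_pos hs₀, div_lt_iff₀ hs₀, mul_comm]
  have hcomb := hK hmem hb (a := s) (b := 1 - s) hs₀.le (by linarith) (by ring)
  convert hcomb using 1
  rw [smul_add, smul_smul, mul_div_cancel₀ _ hs₀.ne']
  abel

theorem absorbent_of_zero_mem_algCore_s14 {D : Set V} (hD : (0 : V) ∈ algCore D) :
    Absorbent ℝ D := by
  refine absorbent_iff_eventually_nhdsNE_zero.2 fun v => ?_
  obtain ⟨δ, hδ, hδD⟩ := hD.2 v
  refine nhdsWithin_le_nhds (Metric.eventually_nhds_iff.2 ⟨δ, hδ, fun t ht => ?_⟩)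
  simpa using hδD t (by simpa using ht)

/-- Hahn–Banach: extend `t • p ↦ t` from the line through `p`, dominated by the gauge. -/
theorem exists_linearMap_eq_one_le_gauge_s14 {D : Set V} (hD : Convex ℝ D) (habs : Absorbent ℝ D)
    {p : V} (hp : 1 ≤ gauge D p) : ∃ L : V →ₗ[ℝ] ℝ, L p = 1 ∧ ∀ x, L x ≤ gauge D x := by
  have hp₀ : p ≠ 0 := by rintro rfl; norm_num at hp
  let f : V →ₗ.[ℝ] ℝ := LinearPMap.mkSpanSingleton p 1 hp₀
  have hf : ∀ x : f.domain, f x ≤ gauge D x := by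
    rintro ⟨x, hx⟩
    obtain ⟨c, rfl⟩ := Submodule.mem_span_singleton.1 hx
    rw [LinearPMap.mkSpanSingleton'_apply, smul_eq_mul, mul_one]
    rcases le_or_gt 0 c with hc | hc
    · rw [gauge_smul_of_nonneg hc, smul_eq_mul]
      exact le_mul_of_one_le_right hc hp
    · exact hc.le.trans (gauge_nonneg _)
  obtain ⟨L, hLf, hLD⟩ := exists_extension_of_le_sublinear f (gauge D)
    (fun c hc x => gauge_smul_of_nonneg hc.le x) (gauge_add_le hD habs) hf
  refine ⟨L, ?_, hLD⟩
  rw [← f.domain.coe_mk p (Submodule.mem_span_singleton_self p), hLf]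
  exact LinearPMap.mkSpanSingleton'_apply_self _ _ _ _

/-- The gauge of `A - B` recentred at `a₀ - b₀` is at least `1` at the origin, since a point
of `A - B` beyond it would produce a point of `algCore A ∩ B`. -/
theorem exists_separation_of_disjoint_algCore {A B : Set V} (hA : Convex ℝ A)
    (hB : Convex ℝ B) {a₀ : V} (ha₀ : a₀ ∈ algCore A) (hBne : B.Nonempty)
    (hAB : Disjoint (algCore A) B) : ∃ L : V →ₗ[ℝ] ℝ, L ≠ 0 ∧ ∀ a ∈ A, ∀ b ∈ B, L b ≤ L a := by
  obtain ⟨b₀, hb₀⟩ := hBne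
  set D : Set V := (fun x => (a₀ - b₀) + x) ⁻¹' (A - B)
  have hD : Convex ℝ D := (hA.sub hB).translate_preimage_right _
  have hD₀ : (0 : V) ∈ algCore D := by
    refine ⟨by simpa [D] using sub_mem_sub ha₀.1 hb₀, fun v => ?_⟩
    obtain ⟨δ, hδ, hδA⟩ := ha₀.2 v
    refine ⟨δ, hδ, fun t ht => ?_⟩
    have hmem := sub_mem_sub (hδA t ht) hb₀
    simp only [D, mem_preimage, zero_add]
    convert hmem using 1
    abel
  have habs := absorbent_of_zero_mem_algCore_s14 hD₀
  have hgauge : 1 ≤ gauge D (-(a₀ - b₀)) := by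
    by_contra! hlt
    obtain ⟨t, ht₀, ht₁, d, hd, hdt⟩ := exists_lt_of_gauge_lt habs hlt
    obtain ⟨a₁, ha₁, b₁, hb₁, hab₁⟩ := mem_sub.1 hd
    have hcore := algCore_smul_add_smul_mem hA ha₀ ha₁ (s := 1 - t) (by linarith) (by linarith)
    have hmem := hB hb₀ hb₁ (a := 1 - t) (b := 1 - (1 - t)) (by linarith) (by linarith) (by ring)
    have hsame : (1 - t) • a₀ + (1 - (1 - t)) • a₁ = (1 - t) • b₀ + (1 - (1 - t)) • b₁ := by
      linear_combination (norm := module) t • hab₁ + hdt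
    exact Set.disjoint_left.1 hAB hcore (hsame ▸ hmem)
  obtain ⟨L, hL, hLD⟩ := exists_linearMap_eq_one_le_gauge_s14 hD habs hgauge
  refine ⟨-L, fun h => by simp [neg_eq_zero.1 h] at hL, fun a ha b hb => ?_⟩
  have hmem : a - b - (a₀ - b₀) ∈ D := by simpa [D] using sub_mem_sub ha hb
  have hle := (hLD _).trans (gauge_le_one_of_mem hmem)
  simp only [map_sub, map_neg] at hL hle
  simp only [LinearMap.neg_apply]
  linarith

end AlgebraicSeparation

section ConvexAnalysis

variable {V : Type*} [AddCommGroup V] [Module ℝ V]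

theorem ConvexFun.convex_epi {φ : V → EReal} (hφ : ConvexFun φ) : Convex ℝ (epi φ) := by
  rintro ⟨z₁, r₁⟩ h₁ ⟨z₂, r₂⟩ h₂ a b ha hb hab
  obtain rfl : b = 1 - a := by linarith
  show φ (a • z₁ + (1 - a) • z₂) ≤ ((a * r₁ + (1 - a) * r₂ : ℝ) : EReal)
  calc φ (a • z₁ + (1 - a) • z₂) ≤ (a : EReal) * φ z₁ + ((1 - a : ℝ) : EReal) * φ z₂ :=
        hφ z₁ z₂ a ha (by linarith)
    _ ≤ (a : EReal) * r₁ + ((1 - a : ℝ) : EReal) * r₂ :=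
        add_le_add (mul_le_mul_of_nonneg_left h₁ (by exact_mod_cast ha))
          (mul_le_mul_of_nonneg_left h₂ (by exact_mod_cast hb))
    _ = ((a * r₁ + (1 - a) * r₂ : ℝ) : EReal) := by norm_cast

theorem lt_of_mem_algCore_epi {φ : V → EReal} {p : V × ℝ} (hp : p ∈ algCore (epi φ)) :
    φ p.1 < p.2 := by
  obtain ⟨δ, hδ, hδepi⟩ := hp.2 (0, 1)
  have hmem : φ p.1 ≤ ((p.2 - δ / 2 : ℝ) : EReal) := by
    simpa [epi, sub_eq_add_neg] using hδepi (-(δ / 2)) (by rw [abs_neg, abs_of_pos] <;> linarith)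
  exact hmem.trans_lt (EReal.coe_lt_coe_iff.2 (by linarith))

theorem LinearMap.eq_zero_of_isMinOn_algCore (L : V →ₗ[ℝ] ℝ) {S : Set V} {x₀ : V}
    (hx₀ : x₀ ∈ algCore S) (hmin : IsMinOn L S x₀) : L = 0 := by
  ext v
  obtain ⟨δ, hδ, hδS⟩ := hx₀.2 v
  have hplus := isMinOn_iff.1 hmin _ (hδS (δ / 2) (by rw [abs_of_pos] <;> linarith))
  have hminus := isMinOn_iff.1 hmin _ (hδS (-(δ / 2)) (by rw [abs_neg, abs_of_pos] <;> linarith))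
  simp only [map_add, map_smul, smul_eq_mul] at hplus hminus
  simp only [LinearMap.zero_apply]
  nlinarith

theorem LinearMap.apply_eq_apply_inl_add_mul (L : V × ℝ →ₗ[ℝ] ℝ) (q : V × ℝ) :
    L q = L (q.1, 0) + q.2 * L (0, 1) := by
  rw [← smul_eq_mul, ← map_smul, ← map_add]
  simp

/-- `L (0, 1)` is the vertical component of the hyperplane separating `epi φ` from `B`. -/
theorem separation_vertical_pos {φ : V → EReal} (hbot : ∀ z, φ z ≠ ⊥) {B : Set (V × ℝ)}
    {L : V × ℝ →ₗ[ℝ] ℝ} (hL : L ≠ 0) (hsep : ∀ a ∈ epi φ, ∀ b ∈ B, L b ≤ L a) {p : V × ℝ}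
    (hpA : p ∈ epi φ) (hpB : p ∈ B) (hcore : ∃ b ∈ B, b.1 ∈ algCore (fDom φ)) :
    0 < L (0, 1) := by
  have hsplit := L.apply_eq_apply_inl_add_mul
  have hnonneg : 0 ≤ L (0, 1) := by
    have hup : (p.1, p.2 + 1) ∈ epi φ :=
      le_trans hpA (EReal.coe_le_coe_iff.2 (by linarith))
    have := hsep _ hup p hpB
    rw [hsplit (p.1, p.2 + 1), hsplit p] at this
    dsimp only at this
    linarith
  refine hnonneg.lt_of_ne fun hzero => hL ?_
  obtain ⟨b, hbB, hbcore⟩ := hcore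
  have hmin : IsMinOn (L ∘ₗ LinearMap.inl ℝ V ℝ) (fDom φ) b.1 := fun z hz => by
    have hzA : (z, (φ z).toReal) ∈ epi φ := (EReal.coe_toReal hz.ne (hbot z)).ge
    have := hsep _ hzA b hbB
    rw [hsplit b, hsplit (z, _), ← hzero] at this
    simpa using this
  have hinl := (L ∘ₗ LinearMap.inl ℝ V ℝ).eq_zero_of_isMinOn_algCore hbcore hmin
  ext q
  · simpa using congrArg (· q) hinl
  · rw [LinearMap.comp_apply, LinearMap.inr_apply, ← hzero, LinearMap.zero_comp]
    rfl

theorem exists_nonvertical_separation {φ : V → EReal} (hbot : ∀ z, φ z ≠ ⊥)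
    (hconv : ConvexFun φ) {B : Set (V × ℝ)} (hB : Convex ℝ B) (hepi : (algCore (epi φ)).Nonempty)
    (hAB : Disjoint (algCore (epi φ)) B) {p : V × ℝ} (hpA : p ∈ epi φ) (hpB : p ∈ B)
    (hcore : ∃ b ∈ B, b.1 ∈ algCore (fDom φ)) :
    ∃ Λ : V →ₗ[ℝ] ℝ, ∀ a ∈ epi φ, ∀ b ∈ B, b.2 - Λ b.1 ≤ a.2 - Λ a.1 := by
  obtain ⟨a₀, ha₀⟩ := hepi
  obtain ⟨L, hL, hsep⟩ := exists_separation_of_disjoint_algCore hconv.convex_epi hB ha₀ ⟨p, hpB⟩ hAB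
  have hβ := separation_vertical_pos hbot hL hsep hpA hpB hcore
  refine ⟨-(L (0, 1))⁻¹ • (L ∘ₗ LinearMap.inl ℝ V ℝ), fun a ha b hb => ?_⟩
  have hnormalize : ∀ q : V × ℝ,
      q.2 - (-(L (0, 1))⁻¹ • (L ∘ₗ LinearMap.inl ℝ V ℝ)) q.1 = (L (0, 1))⁻¹ * L q := fun q => by
    rw [L.apply_eq_apply_inl_add_mul q]
    simp only [LinearMap.smul_apply, LinearMap.comp_apply, LinearMap.inl_apply, smul_eq_mul]
    field_simp
    ring
  rw [hnormalize, hnormalize]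
  exact mul_le_mul_of_nonneg_left (hsep a ha b hb) (inv_nonneg.2 hβ.le)

/-- Sum rule `∂(φ + δ_Ω)(z̄) ⊆ ∂φ(z̄) + N(z̄; Ω)`, obtained by separating `epi φ` from the
hypograph over `Ω` of the affine minorant `z ↦ φ z̄ + ℓ (z - z̄)`. -/
theorem exists_mem_subdiff_sub_mem_normalCone {φ : V → EReal} (hbot : ∀ z, φ z ≠ ⊥)
    (hconv : ConvexFun φ) {Ω : Set V} (hΩ : Convex ℝ Ω) (hepi : (algCore (epi φ)).Nonempty)
    (hdom : (algCore (fDom φ) ∩ Ω).Nonempty) {zbar : V} (hzbar : zbar ∈ Ω) (hfin : φ zbar ≠ ⊤)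
    {ℓ : V →ₗ[ℝ] ℝ} (hℓ : ∀ z ∈ Ω, φ zbar + (ℓ (z - zbar) : EReal) ≤ φ z) :
    ∃ Λ ∈ subdiff φ zbar, ℓ - Λ ∈ normalCone zbar Ω := by
  set c := (φ zbar).toReal
  have hc : (c : EReal) = φ zbar := EReal.coe_toReal hfin (hbot zbar)
  have hminorant : ∀ z ∈ Ω, ((ℓ z + (c - ℓ zbar) : ℝ) : EReal) ≤ φ z := fun z hz => by
    convert hℓ z hz using 1
    rw [← hc, ← EReal.coe_add, map_sub]
    ring_nf
  set B : Set (V × ℝ) := {q | q.1 ∈ Ω ∧ q.2 ≤ ℓ q.1 + (c - ℓ zbar)}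
  have hB : Convex ℝ B := ((ℓ.concaveOn hΩ).add_const _).convex_hypograph
  have hAB : Disjoint (algCore (epi φ)) B := Set.disjoint_left.2 fun q hqA hqB =>
    (lt_of_mem_algCore_epi hqA).not_ge ((EReal.coe_le_coe_iff.2 hqB.2).trans (hminorant _ hqB.1))
  have hbarB : (zbar, c) ∈ B := ⟨hzbar, by simp⟩
  obtain ⟨z₀, hz₀dom, hz₀Ω⟩ := hdom
  obtain ⟨Λ, hΛ⟩ := exists_nonvertical_separation hbot hconv hB hepi hAB hc.ge hbarB
    ⟨(z₀, ℓ z₀ + (c - ℓ zbar)), ⟨hz₀Ω, le_rfl⟩, hz₀dom⟩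
  refine ⟨Λ, fun z => ?_, fun w hw => ?_⟩
  · rcases eq_or_ne (φ z) ⊤ with htop | htop
    · simp [htop]
    · have hz := EReal.coe_toReal htop (hbot z)
      have hsep : c - Λ zbar ≤ (φ z).toReal - Λ z := hΛ (z, _) hz.ge _ hbarB
      rw [← hc, ← hz, ← EReal.coe_add, EReal.coe_le_coe_iff, map_sub]
      linarith
  · have hsep : ℓ w + (c - ℓ zbar) - Λ w ≤ c - Λ zbar :=
      hΛ (zbar, c) hc.ge (w, _) ⟨hw, le_rfl⟩
    simp only [LinearMap.sub_apply, map_sub]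
    linarith

end ConvexAnalysis

section MarginalFunction

variable {X Y : Type*} [AddCommGroup X] [Module ℝ X] [AddCommGroup Y] [Module ℝ Y]

theorem pairFun_comp_inl_comp_inr (Λ : X × Y →ₗ[ℝ] ℝ) :
    pairFun (Λ ∘ₗ LinearMap.inl ℝ X Y) (Λ ∘ₗ LinearMap.inr ℝ X Y) = Λ := by
  ext p <;> simp [pairFun, Prod.mk_zero_zero]

theorem mem_coderiv_iff_pairFun_mem_normalCone {F : X → Set Y} {xbar : X} {ybar : Y}
    {f : X →ₗ[ℝ] ℝ} {g : Y →ₗ[ℝ] ℝ} :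
    f ∈ coderiv F xbar ybar g ↔ pairFun f (-g) ∈ normalCone (xbar, ybar) (svGraph F) :=
  ⟨fun h p hp => by simpa [pairFun, sub_eq_add_neg] using h p.1 p.2 hp,
    fun h x y hy => by simpa [pairFun, sub_eq_add_neg] using h (x, y) hy⟩

variable {φ : X × Y → EReal} {F : X → Set Y} {μ : X → EReal} {xbar : X} {ybar : Y}

theorem add_le_of_mem_subdiff_marginal (hμ : ∀ x, μ x = ⨅ y ∈ F x, φ (x, y))
    (hval : μ xbar = φ (xbar, ybar)) {h : X →ₗ[ℝ] ℝ} (hh : h ∈ subdiff μ xbar) :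
    ∀ z ∈ svGraph F,
      φ (xbar, ybar) + ((h ∘ₗ LinearMap.fst ℝ X Y) (z - (xbar, ybar)) : EReal) ≤ φ z :=
  fun z hz =>
  calc φ (xbar, ybar) + ((h ∘ₗ LinearMap.fst ℝ X Y) (z - (xbar, ybar)) : EReal)
      = μ xbar + (h (z.1 - xbar) : EReal) := by rw [hval]; rfl
    _ ≤ μ z.1 := hh z.1
    _ ≤ φ z := by rw [hμ]; exact iInf₂_le z.2 hz

theorem add_mem_subdiff_marginal (hμ : ∀ x, μ x = ⨅ y ∈ F x, φ (x, y))
    (hval : μ xbar = φ (xbar, ybar)) {f f' : X →ₗ[ℝ] ℝ} {g : Y →ₗ[ℝ] ℝ}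
    (hfg : pairFun f g ∈ subdiff φ (xbar, ybar)) (hf' : f' ∈ coderiv F xbar ybar g) :
    f + f' ∈ subdiff μ xbar := by
  intro x
  rw [hμ x]
  refine le_iInf₂ fun y hy => ?_
  have hcoderiv := hf' x y hy
  calc μ xbar + ((f + f') (x - xbar) : EReal)
      ≤ φ (xbar, ybar) + (pairFun f g ((x, y) - (xbar, ybar)) : EReal) := by
        rw [hval]
        refine add_le_add le_rfl (EReal.coe_le_coe_iff.2 ?_)
        simp only [LinearMap.add_apply, pairFun, LinearMap.coe_comp, Function.comp_apply,
          LinearMap.fst_apply, LinearMap.snd_apply, Prod.fst_sub, Prod.snd_sub]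
        linarith
    _ ≤ φ (x, y) := hfg (x, y)

end MarginalFunction

theorem marginal_function_subdifferential_qc1_general {X Y : Type*} [AddCommGroup X] [Module ℝ X]
    [AddCommGroup Y] [Module ℝ Y] (φ : X × Y → EReal) (F : X → Set Y)
    (hbot : ∀ p, φ p ≠ ⊥) (hconv : ConvexFun φ) (hconvF : Convex ℝ (svGraph F))
    (μ : X → EReal) (hμ : ∀ x : X, μ x = ⨅ y ∈ F x, φ (x, y))
    (xbar : X) (hxbar : xbar ∈ fDom μ)
    (hqc₁ : (algCore (epi φ)).Nonempty)
    (hqc₂ : (algCore (fDom φ) ∩ svGraph F).Nonempty)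
    (ybar : Y) (hybar : ybar ∈ F xbar ∧ μ xbar = φ (xbar, ybar)) :
    subdiff μ xbar =
      {h : X →ₗ[ℝ] ℝ | ∃ (f : X →ₗ[ℝ] ℝ) (g : Y →ₗ[ℝ] ℝ),
        pairFun f g ∈ subdiff φ (xbar, ybar) ∧
        ∃ f' ∈ coderiv F xbar ybar g, h = f + f'} := by
  have hfin : φ (xbar, ybar) ≠ ⊤ := hybar.2 ▸ hxbar.ne
  ext h
  constructor
  · intro hh
    obtain ⟨Λ, hΛ, hnormal⟩ := exists_mem_subdiff_sub_mem_normalCone hbot hconv hconvF hqc₁ hqc₂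
      hybar.1 hfin (add_le_of_mem_subdiff_marginal hμ hybar.2 hh)
    refine ⟨Λ ∘ₗ LinearMap.inl ℝ X Y, Λ ∘ₗ LinearMap.inr ℝ X Y,
      (pairFun_comp_inl_comp_inr Λ).symm ▸ hΛ, h - Λ ∘ₗ LinearMap.inl ℝ X Y,
      mem_coderiv_iff_pairFun_mem_normalCone.2 ?_, by abel⟩
    convert hnormal using 1
    ext p <;> simp [pairFun, Prod.mk_zero_zero]
  · rintro ⟨f, g, hfg, f', hf', rfl⟩
    exact add_mem_subdiff_marginal hμ hybar.2 hfg hf'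

/-- subdifferential of the convex marginal (optimal value) function under
the first qualification condition. -/
theorem marginal_function_subdifferential_qc1 {X Y : Type*} [AddCommGroup X] [Module ℝ X]
    [AddCommGroup Y] [Module ℝ Y] (φ : X × Y → EReal) (F : X → Set Y)
    (hbot : ∀ p, φ p ≠ ⊥) (hconv : ConvexFun φ) (hconvF : Convex ℝ (svGraph F))
    (μ : X → EReal) (hμ : ∀ x : X, μ x = ⨅ y ∈ F x, φ (x, y))
    (hfin : ∀ x : X, μ x ≠ ⊥) (xbar : X) (hxbar : xbar ∈ fDom μ)
    (hqc₁ : (algCore (epi φ)).Nonempty)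
    (hqc₂ : (algCore (fDom φ) ∩ svGraph F).Nonempty)
    (ybar : Y) (hybar : ybar ∈ F xbar ∧ μ xbar = φ (xbar, ybar)) :
    subdiff μ xbar =
      {h : X →ₗ[ℝ] ℝ | ∃ (f : X →ₗ[ℝ] ℝ) (g : Y →ₗ[ℝ] ℝ),
        pairFun f g ∈ subdiff φ (xbar, ybar) ∧
        ∃ f' ∈ coderiv F xbar ybar g, h = f + f'} :=
  marginal_function_subdifferential_qc1_general φ F hbot hconv hconvF μ hμ xbar hxbar hqc₁ hqc₂ ybar
    hybar
end
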